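/- arXiv:1810.05942 — 5 statements merged into one kernel-verified Lean document; each statement's English description precedes it below -/
import Mathlib

section
/- Let v : [0,d] → (0,∞) be a C^3 function with H(v) ≡ constant and v_z(0) = v_z(d) = 0, and let w : [0,d]×S^(n−1) → ℝ be smooth. Set u = w/sqrt(1+v_z^2) and |A|^2 = (n−1)/(v^2(1+v_z^2)) + v_zz^2/(1+v_z^2)^3. Then ∫_{S^(n−1)} ∫_0^d ( u_z^2/(1+v_z^2) + ‖∇̃u‖^2/v^2 − |A|^2 u^2 )·v^(n−1)·sqrt(1+v_z^2) dz dμ = ∫_{S^(n−1)} ∫_0^d ( w_z^2/(1+v_z^2) + ‖∇̃w‖^2/v^2 − (n−1)w^2/v^2 )·v^(n−1)/sqrt(1+v_z^2) dz dμ, where ∇̃ denotes the gradient on the unit sphere S^(n−1). -/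
open Real MeasureTheory intervalIntegral Set

noncomputable section

def Qfun (n : ℕ) (t : ℝ) : ℝ :=
  if t = 1 then ((n : ℝ) - 1) / n else (1 - t ^ (n - 1)) / (1 - t ^ n)

def Rfun (n : ℕ) (x t : ℝ) : ℝ :=
  if t = 1 then Real.sqrt (((n : ℝ) - 1) * (1 - x) * x)
  else (1 / |1 - t|) *
    Real.sqrt (((1 - (1 - t) * x) ^ (n - 1) /
      (1 - Qfun n t + Qfun n t * (1 - (1 - t) * x) ^ n)) ^ 2 - 1)

def zeta (n : ℕ) (x t : ℝ) : ℝ := ∫ y in x..1, (Rfun n y t)⁻¹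

def Pfun (n : ℕ) (t : ℝ) : ℝ := zeta n 0 t

def ufun (n : ℕ) (d : ℝ) (zinv : ℝ → ℝ → ℝ) (r t z : ℝ) : ℝ :=
  (Qfun n r * d / (Pfun n t * Qfun n t)) *
    (1 - (1 - r) * zinv (Qfun n t * Pfun n t * z / (Qfun n r * d)) r)

def vfun (n : ℕ) (d : ℝ) (zinv : ℝ → ℝ → ℝ) (t z : ℝ) : ℝ := ufun n d zinv t t z

def etafun (n : ℕ) (d t : ℝ) : ℝ := n * Qfun n t * Pfun n t / d

def omegaBall (n : ℕ) : ℝ :=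
  (volume (Metric.ball (0 : EuclideanSpace ℝ (Fin n)) 1)).toReal

def Vvol (n : ℕ) (d : ℝ) (zinv : ℝ → ℝ → ℝ) (t : ℝ) : ℝ :=
  omegaBall n * ∫ z in (0:ℝ)..d, vfun n d zinv t z ^ n

def Hmc (n : ℕ) (s : Set ℝ) (u : ℝ → ℝ) (z : ℝ) : ℝ :=
  -(derivWithin (derivWithin u s) s z) / (1 + derivWithin u s z ^ 2) ^ ((3:ℝ)/2)
  + ((n : ℝ) - 1) / (u z * Real.sqrt (1 + derivWithin u s z ^ 2))

def DH (n : ℕ) (s : Set ℝ) (v w : ℝ → ℝ) (z : ℝ) : ℝ :=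
  -(derivWithin (derivWithin w s) s z) / (1 + derivWithin v s z ^ 2) ^ ((3:ℝ)/2)
  + 3 * derivWithin v s z * derivWithin (derivWithin v s) s z * derivWithin w s z /
      (1 + derivWithin v s z ^ 2) ^ ((5:ℝ)/2)
  - ((n : ℝ) - 1) * derivWithin v s z * derivWithin w s z /
      (v z * (1 + derivWithin v s z ^ 2) ^ ((3:ℝ)/2))
  - ((n : ℝ) - 1) * w z / (v z ^ 2 * Real.sqrt (1 + derivWithin v s z ^ 2))

def Wproj (n : ℕ) (d : ℝ) (v u : ℝ → ℝ) (z : ℝ) : ℝ :=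
  u z - (∫ s in (0:ℝ)..d, u s * v s ^ (n-1)) / (∫ s in (0:ℝ)..d, v s ^ (n-1))

def memX (n : ℕ) (d : ℝ) (v w : ℝ → ℝ) : Prop :=
  ContDiffOn ℝ (⊤ : ℕ∞) w (Icc 0 d) ∧ (∫ z in (0:ℝ)..d, w z * v z ^ (n-1)) = 0 ∧
  derivWithin w (Icc (0:ℝ) d) 0 = 0 ∧ derivWithin w (Icc (0:ℝ) d) d = 0

def sphereMeasure (n : ℕ) : Measure (EuclideanSpace ℝ (Fin n)) :=
  (μH[(n:ℝ) - 1]).restrict (Metric.sphere 0 1)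

def tgrad2 (n : ℕ) (f : EuclideanSpace ℝ (Fin n) → ℝ) (θ : EuclideanSpace ℝ (Fin n)) : ℝ :=
  ‖gradient f θ‖ ^ 2 - (inner ℝ (gradient f θ) θ : ℝ) ^ 2

def A2 (n : ℕ) (d : ℝ) (v : ℝ → ℝ) (z : ℝ) : ℝ :=
  ((n:ℝ)-1) / (v z ^ 2 * (1 + derivWithin v (Icc 0 d) z ^ 2))
  + derivWithin (derivWithin v (Icc 0 d)) (Icc 0 d) z ^ 2 /
      (1 + derivWithin v (Icc 0 d) z ^ 2) ^ 3

def Jfunc (n : ℕ) (d : ℝ) (v : ℝ → ℝ) (u : ℝ → EuclideanSpace ℝ (Fin n) → ℝ) : ℝ :=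
  ∫ θ, (∫ z in (0:ℝ)..d,
    ((deriv (fun z' => u z' θ) z) ^ 2 / (1 + derivWithin v (Icc 0 d) z ^ 2)
      + tgrad2 n (u z) θ / v z ^ 2
      - A2 n d v z * u z θ ^ 2)
      * v z ^ (n-1) * Real.sqrt (1 + derivWithin v (Icc 0 d) z ^ 2)) ∂(sphereMeasure n)

def constraintZero (n : ℕ) (d : ℝ) (v : ℝ → ℝ) (u : ℝ → EuclideanSpace ℝ (Fin n) → ℝ) : Prop :=
  (∫ θ, (∫ z in (0:ℝ)..d,
    u z θ * v z ^ (n-1) * Real.sqrt (1 + derivWithin v (Icc 0 d) z ^ 2)) ∂(sphereMeasure n)) = 0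

def Stable (n : ℕ) (d : ℝ) (v : ℝ → ℝ) : Prop :=
  ∀ u : ℝ → EuclideanSpace ℝ (Fin n) → ℝ, ContDiff ℝ (⊤ : ℕ∞) (Function.uncurry u) →
    constraintZero n d v u → 0 ≤ Jfunc n d v u

def Unstable (n : ℕ) (d : ℝ) (v : ℝ → ℝ) : Prop :=
  ∃ u : ℝ → EuclideanSpace ℝ (Fin n) → ℝ, ContDiff ℝ (⊤ : ℕ∞) (Function.uncurry u) ∧
    constraintZero n d v u ∧ Jfunc n d v u < 0

lemma cast_mul_pow_pred (m : ℕ) (x : ℝ) (hx : x ≠ 0) :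
    (m:ℝ) * x ^ (m-1) = (m:ℝ) * x ^ m / x := by
  cases m with
  | zero => simp
  | succ k => rw [Nat.add_sub_cancel, pow_succ, mul_div_assoc, mul_div_cancel_right₀ _ hx]

lemma gradient_div_const {n : ℕ} (f : EuclideanSpace ℝ (Fin n) → ℝ)
    (θ : EuclideanSpace ℝ (Fin n)) (a : ℝ) (hf : DifferentiableAt ℝ f θ) (ha : a ≠ 0) :
    gradient (fun x => f x / a) θ = a⁻¹ • gradient f θ := by
  unfold gradient
  have h : fderiv ℝ (fun x => f x / a) θ = a⁻¹ • fderiv ℝ f θ := by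
    simp only [div_eq_mul_inv]
    rw [fderiv_mul_const hf]
  rw [h, _root_.map_smul]

lemma tgrad2_div_const {n : ℕ} (f : EuclideanSpace ℝ (Fin n) → ℝ)
    (θ : EuclideanSpace ℝ (Fin n)) (a : ℝ) (hf : DifferentiableAt ℝ f θ) (ha : 0 < a) :
    tgrad2 n (fun x => f x / a) θ = tgrad2 n f θ / a ^ 2 := by
  unfold tgrad2
  rw [gradient_div_const f θ a hf ha.ne']
  rw [norm_smul, real_inner_smul_left]
  rw [mul_pow, mul_pow]
  have h2 : ‖a⁻¹‖^2 = (a⁻¹)^2 := by rw [Real.norm_eq_abs, sq_abs]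
  rw [h2]
  field_simp

lemma rpow_three_half (x : ℝ) (hx : 0 ≤ x) : x ^ ((3:ℝ)/2) = Real.sqrt x ^ 3 := by
  rw [Real.sqrt_eq_rpow, ← Real.rpow_natCast (x ^ ((1:ℝ)/2)) 3, ← Real.rpow_mul hx]
  norm_num

set_option maxHeartbeats 1000000 in
lemma key_algebra (ν W W' p q v s T A B c0 : ℝ) (hv : v ≠ 0) (hs : 0 < s)
    (hs2 : s^2 = 1+p^2) (hAB : A = B * v)
    (hc0 : -q / s^3 + (ν-1)/(v*s) = c0) :
    (((W' * s - W * (p * q / s)) / s ^ 2) ^ 2 / (1 + p^2)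
      + T / s^2 / v^2
      - ((ν-1)/(v^2*(1+p^2)) + q^2/(1+p^2)^3) * (W / s)^2) * A * s
    = (W'^2/(1+p^2) + T/v^2 - (ν-1)*W^2/v^2) * A / s
      + (2*W*W' * (c0 * p * s⁻¹^2 * A - (ν-1) * p * s⁻¹^3 * B)
         + W^2 * (c0 * (q * s⁻¹^2 * A + p * (2*s⁻¹*(-(p*q)*s⁻¹^3)) * A + p * s⁻¹^2 * ((ν-1)*B*p))
                  - (ν-1) * (q * s⁻¹^3 * B + p * (3*s⁻¹^2*(-(p*q)*s⁻¹^3)) * B + p * s⁻¹^3 * ((ν-2)*B/v*p)))) := by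
  subst hAB
  subst hc0
  have hsne : s ≠ 0 := hs.ne'
  have hkey : (((W' * s - W * (p * q / s)) / s ^ 2) ^ 2 / (1 + p^2)
      + T / s^2 / v^2
      - ((ν-1)/(v^2*(1+p^2)) + q^2/(1+p^2)^3) * (W / s)^2) * (B*v) * s
    - ((W'^2/(1+p^2) + T/v^2 - (ν-1)*W^2/v^2) * (B*v) / s
      + (2*W*W' * ((-q / s^3 + (ν-1)/(v*s)) * p * s⁻¹^2 * (B*v) - (ν-1) * p * s⁻¹^3 * B)
         + W^2 * ((-q / s^3 + (ν-1)/(v*s)) * (q * s⁻¹^2 * (B*v) + p * (2*s⁻¹*(-(p*q)*s⁻¹^3)) * (B*v) + p * s⁻¹^2 * ((ν-1)*B*p))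
                  - (ν-1) * (q * s⁻¹^3 * B + p * (3*s⁻¹^2*(-(p*q)*s⁻¹^3)) * B + p * s⁻¹^3 * ((ν-2)*B/v*p)))))
    = (s^2 - (p^2+1)) * (W^2 * v * B * s * ((ν-1)*s^4 + q^2*v^2)) / (s^8*v^2) := by
    rw [← hs2]
    field_simp
    ring
  have h0 : (s^2 - (p^2+1)) = 0 := by rw [hs2]; ring
  rw [h0] at hkey
  linear_combination hkey

set_option maxHeartbeats 1000000 in
lemma inner_eq (n : ℕ) (hn : 2 ≤ n) (d : ℝ) (hd : 0 < d) (c0 : ℝ) (v p q W T : ℝ → ℝ)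
    (hvpos : ∀ z ∈ Icc (0:ℝ) d, 0 < v z)
    (hvc : ContinuousOn v (Icc 0 d)) (hpc : ContinuousOn p (Icc 0 d))
    (hqc : ContinuousOn q (Icc 0 d))
    (hvd : ∀ z ∈ Ioo (0:ℝ) d, HasDerivAt v (p z) z)
    (hpd : ∀ z ∈ Ioo (0:ℝ) d, HasDerivAt p (q z) z)
    (hCMC : ∀ z ∈ Icc (0:ℝ) d,
      -q z / (1 + p z^2)^((3:ℝ)/2) + ((n:ℝ)-1)/(v z * Real.sqrt (1+p z^2)) = c0)
    (hp0 : p 0 = 0) (hpdd : p d = 0)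
    (hW : ContDiff ℝ (⊤ : ℕ∞) W) (hT : Continuous T) :
    (∫ z in (0:ℝ)..d,
      ((deriv (fun z' => W z' / Real.sqrt (1 + p z'^2)) z)^2/(1+p z^2)
        + T z / Real.sqrt (1+p z^2)^2 / v z^2
        - (((n:ℝ)-1)/(v z^2*(1+p z^2)) + q z^2/(1+p z^2)^3) * (W z/Real.sqrt (1+p z^2))^2)
        * v z^(n-1) * Real.sqrt (1+p z^2))
    = ∫ z in (0:ℝ)..d,
      ((deriv W z)^2/(1+p z^2) + T z/v z^2 - ((n:ℝ)-1)*W z^2/v z^2)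
        * v z^(n-1)/Real.sqrt (1+p z^2) := by
  have h1p : ∀ z : ℝ, 0 < 1 + p z^2 := fun z => by positivity
  have hsfpos : ∀ z : ℝ, 0 < Real.sqrt (1 + p z^2) := fun z => Real.sqrt_pos.mpr (h1p z)
  have hsne : ∀ z : ℝ, Real.sqrt (1 + p z^2) ≠ 0 := fun z => (hsfpos z).ne'
  have hsq : ∀ z : ℝ, Real.sqrt (1 + p z^2)^2 = 1 + p z^2 := fun z => Real.sq_sqrt (h1p z).le
  have hvne : ∀ z ∈ Icc (0:ℝ) d, v z ≠ 0 := fun z hz => (hvpos z hz).ne'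
  have hWd : ∀ z : ℝ, HasDerivAt W (deriv W z) z := fun z =>
    ((hW.differentiable (by simp)) z).hasDerivAt
  have hW'c : Continuous (deriv W) :=
    (contDiff_infty_iff_deriv.mp (hW.of_le (by simp))).2.continuous
  have hWc : Continuous W := hW.continuous
  have hW'c2 : Continuous (fun z => deriv W z) :=
    (contDiff_infty_iff_deriv.mp (hW.of_le (by simp))).2.continuous
  -- derivative of sqrt(1+p^2) on the interior
  have hsfd : ∀ z ∈ Ioo (0:ℝ) d, HasDerivAt (fun z' => Real.sqrt (1 + p z'^2))
      (p z * q z / Real.sqrt (1 + p z^2)) z := by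
    intro z hz
    have h := (((hpd z hz).fun_pow 2).const_add 1).sqrt (h1p z).ne'
    convert h using 1
    push_cast
    rw [pow_one]
    field_simp
  have hinv : ∀ z ∈ Ioo (0:ℝ) d, HasDerivAt (fun z' => (Real.sqrt (1 + p z'^2))⁻¹)
      (-(p z * q z / Real.sqrt (1 + p z^2)) / Real.sqrt (1 + p z^2)^2) z := fun z hz =>
    (hsfd z hz).inv (hsne z)
  have hu : ∀ z ∈ Ioo (0:ℝ) d, HasDerivAt (fun z' => W z' / Real.sqrt (1 + p z'^2))
      ((deriv W z * Real.sqrt (1 + p z^2) - W z * (p z * q z / Real.sqrt (1 + p z^2)))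
        / Real.sqrt (1 + p z^2)^2) z := fun z hz =>
    (hWd z).div (hsfd z hz) (hsne z)
  -- the boundary-term function and its derivative
  set g : ℝ → ℝ := fun z => c0 * p z * (Real.sqrt (1 + p z^2))⁻¹^2 * v z^(n-1)
      - ((n:ℝ)-1) * p z * (Real.sqrt (1 + p z^2))⁻¹^3 * v z^(n-2) with hgdef
  set gd : ℝ → ℝ := fun z =>
      c0 * (q z * (Real.sqrt (1 + p z^2))⁻¹^2 * v z^(n-1)
        + p z * (2*(Real.sqrt (1 + p z^2))⁻¹*(-(p z*q z)*(Real.sqrt (1 + p z^2))⁻¹^3)) * v z^(n-1)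
        + p z * (Real.sqrt (1 + p z^2))⁻¹^2 * (((n:ℝ)-1)*v z^(n-2)*p z))
      - ((n:ℝ)-1) * (q z * (Real.sqrt (1 + p z^2))⁻¹^3 * v z^(n-2)
        + p z * (3*(Real.sqrt (1 + p z^2))⁻¹^2*(-(p z*q z)*(Real.sqrt (1 + p z^2))⁻¹^3)) * v z^(n-2)
        + p z * (Real.sqrt (1 + p z^2))⁻¹^3 * (((n:ℝ)-2)*v z^(n-2)/v z*p z)) with hgddef
  set G : ℝ → ℝ := fun z => W z^2 * g z with hGdef
  set Gd : ℝ → ℝ := fun z => 2 * W z * deriv W z * g z + W z^2 * gd z with hGddef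
  have hgd : ∀ z ∈ Ioo (0:ℝ) d, HasDerivAt g (gd z) z := by
    intro z hz
    have hvnez : v z ≠ 0 := hvne z (Ioo_subset_Icc_self hz)
    have hA := (hvd z hz).fun_pow (n-1)
    have hB := (hvd z hz).fun_pow (n-2)
    have hiv2 := (hinv z hz).fun_pow 2
    have hiv3 := (hinv z hz).fun_pow 3
    have h1 := (((hpd z hz).const_mul c0).fun_mul hiv2).fun_mul hA
    have h2 := (((hpd z hz).const_mul ((n:ℝ)-1)).fun_mul hiv3).fun_mul hB
    have h := h1.fun_sub h2
    rw [hgdef, hgddef]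
    refine h.congr_deriv ?_
    have e1 : n-1-1 = n-2 := by omega
    have c1 : ((n-1:ℕ):ℝ) = (n:ℝ)-1 := by
      rw [Nat.cast_sub (by omega : 1 ≤ n)]; norm_num
    have c2 : ((n-2:ℕ):ℝ) = (n:ℝ)-2 := by
      rw [Nat.cast_sub hn]; norm_num
    rw [e1, cast_mul_pow_pred (n-2) (v z) hvnez, c1, c2]
    push_cast
    ring
  have hGderiv : ∀ z ∈ Ioo (0:ℝ) d, HasDerivAt G (Gd z) z := by
    intro z hz
    have h := ((hWd z).fun_pow 2).fun_mul (hgd z hz)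
    rw [hGdef, hGddef]
    refine h.congr_deriv ?_
    push_cast
    ring
  -- continuity
  have hGc : ContinuousOn G (Icc 0 d) := by
    rw [hGdef, hgdef]
    fun_prop (disch := first | exact fun x _ => hsne x | exact hvne | assumption)
  have hGdc : ContinuousOn Gd (Icc 0 d) := by
    rw [hGddef, hgddef, hgdef]
    fun_prop (disch := first | exact fun x _ => hsne x | exact hvne | assumption)
  have hF2c : ContinuousOn (fun z =>
      ((deriv W z)^2/(1+p z^2) + T z/v z^2 - ((n:ℝ)-1)*W z^2/v z^2)
        * v z^(n-1)/Real.sqrt (1+p z^2)) (Icc 0 d) := by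
    fun_prop (disch := first | exact fun x _ => hsne x | exact hvne | exact fun x hx => pow_ne_zero 2 (hvne x hx) | exact fun x _ => (h1p x).ne' | assumption)
  -- FTC: the integral of Gd vanishes
  have hend : G d - G 0 = 0 := by
    rw [hGdef, hgdef]
    simp only [hp0, hpdd]
    ring
  have hGdint : IntervalIntegrable Gd volume 0 d :=
    (hGdc.mono (by rw [uIcc_of_le hd.le])).intervalIntegrable
  have hFTC : ∫ z in (0:ℝ)..d, Gd z = 0 := by
    rw [intervalIntegral.integral_eq_sub_of_hasDeriv_right_of_le hd.le hGc
      (fun z hz => (hGderiv z hz).hasDerivWithinAt) hGdint]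
    exact hend
  -- pointwise identity on the interior
  have hpt : ∀ z ∈ Ioo (0:ℝ) d,
      ((deriv (fun z' => W z' / Real.sqrt (1 + p z'^2)) z)^2/(1+p z^2)
        + T z / Real.sqrt (1+p z^2)^2 / v z^2
        - (((n:ℝ)-1)/(v z^2*(1+p z^2)) + q z^2/(1+p z^2)^3) * (W z/Real.sqrt (1+p z^2))^2)
        * v z^(n-1) * Real.sqrt (1+p z^2)
      = ((deriv W z)^2/(1+p z^2) + T z/v z^2 - ((n:ℝ)-1)*W z^2/v z^2)
          * v z^(n-1)/Real.sqrt (1+p z^2) + Gd z := by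
    intro z hz
    have hzI := Ioo_subset_Icc_self hz
    have hc0z := hCMC z hzI
    rw [(by rw [Real.sqrt_eq_rpow, ← Real.rpow_natCast ((1+p z^2) ^ ((1:ℝ)/2)) 3, ← Real.rpow_mul (h1p z).le]; norm_num : (1+p z^2) ^ ((3:ℝ)/2) = Real.sqrt (1+p z^2) ^ 3)] at hc0z
    rw [(hu z hz).deriv, hGddef, hgdef, hgddef]
    exact key_algebra (n:ℝ) (W z) (deriv W z) (p z) (q z) (v z) (Real.sqrt (1 + p z^2))
      (T z) (v z^(n-1)) (v z^(n-2)) c0 (hvne z hzI) (hsfpos z) (hsq z)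
      (by rw [← pow_succ]; congr 1; omega) hc0z
  -- put everything together
  rw [intervalIntegral.integral_of_le hd.le, intervalIntegral.integral_of_le hd.le,
    MeasureTheory.integral_Ioc_eq_integral_Ioo, MeasureTheory.integral_Ioc_eq_integral_Ioo]
  have hsplit : ∫ z in Ioo (0:ℝ) d,
      ((deriv (fun z' => W z' / Real.sqrt (1 + p z'^2)) z)^2/(1+p z^2)
        + T z / Real.sqrt (1+p z^2)^2 / v z^2
        - (((n:ℝ)-1)/(v z^2*(1+p z^2)) + q z^2/(1+p z^2)^3) * (W z/Real.sqrt (1+p z^2))^2)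
        * v z^(n-1) * Real.sqrt (1+p z^2)
      = ∫ z in Ioo (0:ℝ) d,
        (((deriv W z)^2/(1+p z^2) + T z/v z^2 - ((n:ℝ)-1)*W z^2/v z^2)
          * v z^(n-1)/Real.sqrt (1+p z^2) + Gd z) :=
    MeasureTheory.setIntegral_congr_fun measurableSet_Ioo (fun z hz => hpt z hz)
  rw [hsplit]
  rw [MeasureTheory.integral_add
    ((hF2c.integrableOn_Icc).mono_set Ioo_subset_Icc_self)
    ((hGdc.integrableOn_Icc).mono_set Ioo_subset_Icc_self)]
  have hGd0 : ∫ z in Ioo (0:ℝ) d, Gd z = 0 := by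
    rw [← MeasureTheory.integral_Ioc_eq_integral_Ioo,
      ← intervalIntegral.integral_of_le hd.le]
    exact hFTC
  rw [hGd0, add_zero]

/-- for a C³ CMC profile `v` with Neumann boundary conditions and any
smooth test function `w`, substituting `u = w/√(1+v_z²)` transforms the stability
integrand: `∫∫ (u_z²/(1+v_z²) + ‖∇̃u‖²/v² − |A|²u²) v^(n−1)√(1+v_z²)
= ∫∫ (w_z²/(1+v_z²) + ‖∇̃w‖²/v² − (n−1)w²/v²) v^(n−1)/√(1+v_z²)`. -/
theorem stmt10 (n : ℕ) (hn : 2 ≤ n) (d : ℝ) (hd : 0 < d)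
    (v : ℝ → ℝ)
    (hvpos : ∀ z ∈ Icc (0:ℝ) d, 0 < v z)
    (hv : ContDiffOn ℝ 3 v (Icc (0:ℝ) d))
    (hCMC : ∃ c : ℝ, ∀ z ∈ Icc (0:ℝ) d, Hmc n (Icc (0:ℝ) d) v z = c)
    (hbd0 : derivWithin v (Icc (0:ℝ) d) 0 = 0)
    (hbdd : derivWithin v (Icc (0:ℝ) d) d = 0)
    (w : ℝ → EuclideanSpace ℝ (Fin n) → ℝ)
    (hw : ContDiff ℝ (⊤ : ℕ∞) (Function.uncurry w)) :
    Jfunc n d v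
      (fun z θ => w z θ / Real.sqrt (1 + derivWithin v (Icc (0:ℝ) d) z ^ 2)) =
    ∫ θ, (∫ z in (0:ℝ)..d,
      ((deriv (fun z' => w z' θ) z) ^ 2 / (1 + derivWithin v (Icc (0:ℝ) d) z ^ 2)
        + tgrad2 n (w z) θ / v z ^ 2
        - ((n:ℝ) - 1) * w z θ ^ 2 / v z ^ 2)
        * v z ^ (n-1) / Real.sqrt (1 + derivWithin v (Icc (0:ℝ) d) z ^ 2))
      ∂(sphereMeasure n) := by
  obtain ⟨c0, hCMC⟩ := hCMC
  simp only [Hmc] at hCMC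
  have hIcc : UniqueDiffOn ℝ (Icc (0:ℝ) d) := uniqueDiffOn_Icc hd
  simp only [Jfunc, A2]
  set p : ℝ → ℝ := derivWithin v (Icc (0:ℝ) d) with hpdef
  set q : ℝ → ℝ := derivWithin p (Icc (0:ℝ) d) with hqdef
  have hp2 : ContDiffOn ℝ 2 p (Icc 0 d) := hv.derivWithin hIcc (by norm_num)
  have hq1 : ContDiffOn ℝ 1 q (Icc 0 d) := hp2.derivWithin hIcc (by norm_num)
  have hvd : ∀ z ∈ Ioo (0:ℝ) d, HasDerivAt v (p z) z := fun z hz =>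
    ((hv.differentiableOn (by norm_num) z (Ioo_subset_Icc_self hz)).hasDerivWithinAt).hasDerivAt
      (Icc_mem_nhds hz.1 hz.2)
  have hpd : ∀ z ∈ Ioo (0:ℝ) d, HasDerivAt p (q z) z := fun z hz =>
    ((hp2.differentiableOn (by norm_num) z (Ioo_subset_Icc_self hz)).hasDerivWithinAt).hasDerivAt
      (Icc_mem_nhds hz.1 hz.2)
  refine congrArg (MeasureTheory.integral (sphereMeasure n)) (funext fun θ => ?_)
  have hwdiff : ∀ z : ℝ, DifferentiableAt ℝ (w z) θ := fun z =>
    ((hw.comp (contDiff_const.prodMk contDiff_id)).differentiable (by simp)) θ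
  have h1p : ∀ z : ℝ, 0 < 1 + p z^2 := fun z => by positivity
  have htg : ∀ z : ℝ, tgrad2 n (fun θ' => w z θ' / Real.sqrt (1 + p z^2)) θ
      = tgrad2 n (w z) θ / Real.sqrt (1 + p z^2)^2 := fun z =>
    tgrad2_div_const (w z) θ _ (hwdiff z) (Real.sqrt_pos.mpr (h1p z))
  simp only [htg]
  have hWc : ContDiff ℝ (⊤ : ℕ∞) (fun z => w z θ) := hw.comp (contDiff_id.prodMk contDiff_const)
  have hTc : Continuous (fun z => tgrad2 n (w z) θ) := by
    have hgr : ∀ z : ℝ, gradient (w z) θ =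
        (InnerProductSpace.toDual ℝ (EuclideanSpace ℝ (Fin n))).symm
          ((fderiv ℝ (Function.uncurry w) (z, θ)).comp
            (ContinuousLinearMap.inr ℝ ℝ (EuclideanSpace ℝ (Fin n)))) := by
      intro z
      have h1 : HasFDerivAt (w z)
          ((fderiv ℝ (Function.uncurry w) (z, θ)).comp
            (ContinuousLinearMap.inr ℝ ℝ (EuclideanSpace ℝ (Fin n)))) θ :=
        (((hw.differentiable (by simp)) (z,θ)).hasFDerivAt).comp θ
          (hasFDerivAt_prodMk_right z θ)
      show (InnerProductSpace.toDual ℝ (EuclideanSpace ℝ (Fin n))).symm (fderiv ℝ (w z) θ) = _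
      rw [h1.fderiv]
    have hcont : Continuous (fun z : ℝ => gradient (w z) θ) := by
      simp only [hgr]
      exact (LinearIsometryEquiv.continuous _).comp
        (((hw.continuous_fderiv (by simp)).comp
          (continuous_id.prodMk continuous_const)).clm_comp continuous_const)
    simp only [tgrad2]
    exact (hcont.norm.pow 2).sub ((hcont.inner continuous_const).pow 2)
  exact inner_eq n hn d hd c0 v p q (fun z => w z θ) (fun z => tgrad2 n (w z) θ)
    hvpos hv.continuousOn hp2.continuousOn hq1.continuousOn hvd hpd hCMC hbd0 hbdd hWc hTc
end
end

section
/- The function Q, defined on (0,∞) by Q(t) = (1 − t^(n−1))/(1 − t^n) for t ≠ 1 and Q(1) = (n−1)/n, is continuously differentiable and strictly decreasing on (0,∞), with Q'(t) = −t^(n−2)(t^n − nt + n − 1)/(1 − t^n)^2 for t ≠ 1 and Q'(1) = −(n−1)/(2n). -/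
open Real MeasureTheory intervalIntegral Set

noncomputable section

/-- The derivative of `Q` as given in the paper. -/
def Qderiv (n : ℕ) (t : ℝ) : ℝ :=
  if t = 1 then -((n : ℝ) - 1) / (2 * n)
  else -(t ^ (n - 2) * (t ^ n - n * t + (n : ℝ) - 1)) / (1 - t ^ n) ^ 2

private lemma pow_ne_one {s : ℝ} (hs : 0 < s) (hs1 : s ≠ 1) {n : ℕ} (hn : n ≠ 0) :
    s ^ n ≠ 1 := by
  rcases lt_or_gt_of_ne hs1 with h | h
  · exact ne_of_lt (pow_lt_one₀ hs.le h hn)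
  · exact ne_of_gt (one_lt_pow₀ h hn)

private lemma qfun_eq (n : ℕ) (hn : 2 ≤ n) {s : ℝ} (hs : 0 < s) :
    Qfun n s = (∑ i ∈ Finset.range (n-1), s ^ i) / (∑ i ∈ Finset.range n, s ^ i) := by
  by_cases h1 : s = 1
  · subst h1
    simp [Qfun, Nat.cast_sub (by omega : 1 ≤ n)]
  · rw [Qfun, if_neg h1, geom_sum_eq h1, geom_sum_eq h1]
    have hsn : s ^ n ≠ 1 := pow_ne_one hs h1 (by omega)
    have hsn1 : s ^ (n-1) ≠ 1 := pow_ne_one hs h1 (by omega)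
    have h1' : s - 1 ≠ 0 := sub_ne_zero.2 h1
    rw [div_div_div_eq, div_eq_div_iff (sub_ne_zero.2 (Ne.symm hsn))
      (mul_ne_zero h1' (sub_ne_zero.2 hsn))]
    ring

private lemma S_pos (n : ℕ) (hn : n ≠ 0) {t : ℝ} (ht : 0 < t) :
    (0:ℝ) < ∑ i ∈ Finset.range n, t ^ i :=
  Finset.sum_pos (fun i _ => pow_pos ht i) (Finset.nonempty_range_iff.2 hn)

private lemma S_hasDerivAt (k : ℕ) (t : ℝ) :
    HasDerivAt (fun s : ℝ => ∑ i ∈ Finset.range k, s ^ i)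
      (∑ i ∈ Finset.range k, (i:ℝ) * t ^ (i-1)) t :=
  HasDerivAt.fun_sum (fun i _ => hasDerivAt_pow i t)

private lemma qfun_hasDerivAt_G (n : ℕ) (hn : 2 ≤ n) {t : ℝ} (ht : 0 < t) :
    HasDerivAt (Qfun n)
      (((∑ i ∈ Finset.range (n-1), (i:ℝ) * t ^ (i-1)) * (∑ i ∈ Finset.range n, t ^ i)
        - (∑ i ∈ Finset.range (n-1), t ^ i) * (∑ i ∈ Finset.range n, (i:ℝ) * t ^ (i-1)))
        / (∑ i ∈ Finset.range n, t ^ i) ^ 2) t := by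
  have h := (S_hasDerivAt (n-1) t).div (S_hasDerivAt n t) (ne_of_gt (S_pos n (by omega) ht))
  refine h.congr_of_eventuallyEq ?_
  filter_upwards [IsOpen.mem_nhds isOpen_Ioi ht] with s hs
  exact qfun_eq n hn hs

-- derivative value for t ≠ 1
private lemma qfun_hasDerivAt_ne_one (n : ℕ) (hn : 2 ≤ n) {t : ℝ} (ht : 0 < t) (ht1 : t ≠ 1) :
    HasDerivAt (Qfun n) (Qderiv n t) t := by
  obtain ⟨m, rfl⟩ : ∃ m, n = m + 2 := ⟨n - 2, by omega⟩
  have htn : t ^ (m+2) ≠ 1 := pow_ne_one ht ht1 (by omega)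
  have hden : (1 : ℝ) - t ^ (m+2) ≠ 0 := sub_ne_zero.2 (Ne.symm htn)
  have h1 : HasDerivAt (fun s : ℝ => 1 - s ^ (m+1)) (-((m+1 : ℕ) * t ^ m)) t := by
    simpa using (hasDerivAt_pow (m+1) t).const_sub 1
  have h2 : HasDerivAt (fun s : ℝ => 1 - s ^ (m+2)) (-((m+2 : ℕ) * t ^ (m+1))) t := by
    simpa using (hasDerivAt_pow (m+2) t).const_sub 1
  have h := h1.div h2 hden
  have heq : Qfun (m+2) =ᶠ[nhds t] fun s => (1 - s ^ (m+1)) / (1 - s ^ (m+2)) := by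
    filter_upwards [IsOpen.mem_nhds (isOpen_ne) ht1] with s hs
    simp only [Qfun, if_neg hs]; norm_num
  refine (h.congr_of_eventuallyEq heq).congr_deriv ?_
  rw [Qderiv, if_neg ht1]
  push_cast
  rw [div_eq_div_iff (pow_ne_zero 2 hden) (pow_ne_zero 2 hden)]
  ring

private lemma sum_cast_range (k : ℕ) : (∑ i ∈ Finset.range k, (i:ℝ)) = k * (k - 1) / 2 := by
  induction k with
  | zero => simp
  | succ k ih => rw [Finset.sum_range_succ, ih]; push_cast; ring

private lemma qfun_hasDerivAt (n : ℕ) (hn : 2 ≤ n) {t : ℝ} (ht : 0 < t) :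
    HasDerivAt (Qfun n) (Qderiv n t) t := by
  by_cases ht1 : t = 1
  · subst ht1
    refine (qfun_hasDerivAt_G n hn ht).congr_deriv ?_
    have e1 : ∀ k : ℕ, (∑ i ∈ Finset.range k, (1:ℝ) ^ i) = k := by simp
    have e2 : ∀ k : ℕ, (∑ i ∈ Finset.range k, (i:ℝ) * (1:ℝ) ^ (i-1)) = k * (k - 1) / 2 := by
      intro k; simpa using sum_cast_range k
    rw [e1, e1, e2, e2, Qderiv, if_pos rfl]
    have hc : ((n - 1 : ℕ) : ℝ) = (n : ℝ) - 1 := by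
      push_cast [Nat.cast_sub (by omega : 1 ≤ n)]; ring
    have hnpos : (0:ℝ) < n := by positivity
    rw [hc]
    field_simp
    ring
  · exact qfun_hasDerivAt_ne_one n hn ht ht1

private lemma qderiv_eq_G (n : ℕ) (hn : 2 ≤ n) {t : ℝ} (ht : 0 < t) :
    Qderiv n t =
      ((∑ i ∈ Finset.range (n-1), (i:ℝ) * t ^ (i-1)) * (∑ i ∈ Finset.range n, t ^ i)
        - (∑ i ∈ Finset.range (n-1), t ^ i) * (∑ i ∈ Finset.range n, (i:ℝ) * t ^ (i-1)))
        / (∑ i ∈ Finset.range n, t ^ i) ^ 2 :=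
  (qfun_hasDerivAt n hn ht).unique (qfun_hasDerivAt_G n hn ht)

private lemma qderiv_neg (n : ℕ) (hn : 2 ≤ n) {t : ℝ} (ht : 0 < t) : Qderiv n t < 0 := by
  by_cases ht1 : t = 1
  · subst ht1
    rw [Qderiv, if_pos rfl]
    have h1 : (1:ℝ) ≤ n - 1 := by
      have : (2:ℝ) ≤ n := by exact_mod_cast hn
      linarith
    have h2 : (0:ℝ) < 2 * n := by positivity
    exact div_neg_of_neg_of_pos (by linarith) h2
  · rw [Qderiv, if_neg ht1]
    have hne : (1:ℝ) - t ^ n ≠ 0 := sub_ne_zero.2 (Ne.symm (pow_ne_one ht ht1 (by omega)))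
    have hden : (0:ℝ) < (1 - t ^ n) ^ 2 := pow_two_pos_of_ne_zero hne
    have hkey : (0:ℝ) < t ^ n - n * t + n - 1 := by
      have hid : t ^ n - (n:ℝ) * t + n - 1 = (t - 1) * ((∑ i ∈ Finset.range n, t ^ i) - n) := by
        have := geom_sum_mul t n
        nlinarith [this]
      rw [hid]
      rcases lt_or_gt_of_ne ht1 with h | h
      · have hS : (∑ i ∈ Finset.range n, t ^ i) < n := by
          calc (∑ i ∈ Finset.range n, t ^ i) < ∑ i ∈ Finset.range n, (1:ℝ) := by
                refine Finset.sum_lt_sum (fun i _ => pow_le_one₀ ht.le h.le) ?_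
                exact ⟨1, Finset.mem_range.2 (by omega), by simpa using h⟩
            _ = n := by simp
        exact mul_pos_of_neg_of_neg (by linarith) (by linarith)
      · have hS : (n:ℝ) < ∑ i ∈ Finset.range n, t ^ i := by
          calc (n:ℝ) = ∑ i ∈ Finset.range n, (1:ℝ) := by simp
            _ < ∑ i ∈ Finset.range n, t ^ i := by
                refine Finset.sum_lt_sum (fun i _ => one_le_pow₀ h.le) ?_
                exact ⟨1, Finset.mem_range.2 (by omega), by simpa using h⟩
        exact mul_pos (by linarith) (by linarith)
    have hnum : (0:ℝ) < t ^ (n-2) * (t ^ n - n * t + n - 1) := by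
      have := pow_pos ht (n-2)
      nlinarith
    exact div_neg_of_neg_of_pos (by linarith) hden

/-- `Q` is continuously differentiable and strictly decreasing on `(0,∞)`,
with `Q'(t) = −t^(n−2)(t^n − nt + n − 1)/(1 − t^n)²` for `t ≠ 1` and
`Q'(1) = −(n−1)/(2n)`. -/
theorem stmt11 (n : ℕ) (hn : 2 ≤ n) :
    (∀ t ∈ Ioi (0:ℝ), HasDerivAt (Qfun n) (Qderiv n t) t) ∧
    ContinuousOn (Qderiv n) (Ioi (0:ℝ)) ∧
    StrictAntiOn (Qfun n) (Ioi (0:ℝ)) := by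
  refine ⟨fun t ht => qfun_hasDerivAt n hn ht, ?_, ?_⟩
  · have hG : ContinuousOn (fun t : ℝ =>
        ((∑ i ∈ Finset.range (n-1), (i:ℝ) * t ^ (i-1)) * (∑ i ∈ Finset.range n, t ^ i)
          - (∑ i ∈ Finset.range (n-1), t ^ i) * (∑ i ∈ Finset.range n, (i:ℝ) * t ^ (i-1)))
          / (∑ i ∈ Finset.range n, t ^ i) ^ 2) (Ioi (0:ℝ)) := by
      have c1 : ∀ k : ℕ, Continuous fun t : ℝ => ∑ i ∈ Finset.range k, t ^ i :=
        fun k => continuous_finset_sum _ fun i _ => continuous_pow i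
      have c2 : ∀ k : ℕ, Continuous fun t : ℝ => ∑ i ∈ Finset.range k, (i:ℝ) * t ^ (i-1) :=
        fun k => continuous_finset_sum _ fun i _ => continuous_const.mul (continuous_pow (i-1))
      apply ContinuousOn.div
      · exact (((c2 (n-1)).mul (c1 n)).sub ((c1 (n-1)).mul (c2 n))).continuousOn
      · exact ((c1 n).pow 2).continuousOn
      · intro t ht
        exact pow_ne_zero 2 (ne_of_gt (S_pos n (by omega) ht))
    exact hG.congr fun t ht => qderiv_eq_G n hn ht
  · apply strictAntiOn_of_deriv_neg (convex_Ioi 0)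
    · exact fun t ht => ((qfun_hasDerivAt n hn ht).continuousAt).continuousWithinAt
    · intro t ht
      rw [interior_Ioi] at ht
      rw [(qfun_hasDerivAt n hn ht).deriv]
      exact qderiv_neg n hn ht
end
end

section
/- The function (x,t) ↦ R(x;t) is continuous on [0,1]×(0,∞); moreover R(0;t) = R(1;t) = 0 for all t > 0, and R(1−x; t^(−1)) = t·R(x;t) for all x ∈ [0,1] and t > 0. -/
open Real MeasureTheory intervalIntegral Set

noncomputable section

def sig (n : ℕ) (t : ℝ) : ℝ := ∑ k ∈ Finset.range n, t ^ k

def Efun (n : ℕ) (x t : ℝ) : ℝ :=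
  ∑ k ∈ Finset.range (n-1), t ^ k * (1 - (1-t)*x) ^ k *
    ∑ i ∈ Finset.range (n-1-k), (1 - (1-t)*x) ^ i * t ^ (n-1-k-1-i)

def Gfun (n : ℕ) (x t : ℝ) : ℝ :=
  x * (1-x) * Efun n x t *
    (sig n t * (1 - (1-t)*x) ^ (n-1) + (t ^ (n-1) + sig (n-1) t * (1 - (1-t)*x) ^ n)) /
    (t ^ (n-1) + sig (n-1) t * (1 - (1-t)*x) ^ n) ^ 2

lemma sig_pos {n : ℕ} (hn : 1 ≤ n) {t : ℝ} (ht : 0 < t) : 0 < sig n t := by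
  apply Finset.sum_pos (fun k _ => pow_pos ht k)
  exact Finset.nonempty_range_iff.mpr (by omega)

lemma one_sub_pow (t : ℝ) (k : ℕ) : 1 - t ^ k = (1 - t) * sig k t := by
  unfold sig
  linarith [geom_sum_mul t k]

lemma sig_one (n : ℕ) : sig n 1 = n := by simp [sig]

lemma sig_succ (n : ℕ) (t : ℝ) : sig (n+1) t = sig n t + t ^ n :=
  Finset.sum_range_succ _ n

lemma q_eq {n : ℕ} (hn : 2 ≤ n) {t : ℝ} (ht : 0 < t) :
    Qfun n t = sig (n-1) t / sig n t := by
  unfold Qfun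
  by_cases h : t = 1
  · subst h; rw [if_pos rfl, sig_one, sig_one]
    rw [Nat.cast_sub (by omega)]; norm_num
  · rw [if_neg h, one_sub_pow, one_sub_pow]
    rw [mul_div_mul_left _ _ (sub_ne_zero.mpr (fun hh => h hh.symm))]

lemma s_pos {t x : ℝ} (ht : 0 < t) (hx : x ∈ Icc (0:ℝ) 1) :
    0 < 1 - (1 - t) * x := by
  obtain ⟨hx0, hx1⟩ := hx
  nlinarith [mul_nonneg ht.le hx0, mul_nonneg ht.le (sub_nonneg.2 hx1)]

lemma dtil_pos {n : ℕ} (hn : 2 ≤ n) {t s : ℝ} (ht : 0 < t) (hs : 0 < s) :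
    0 < t ^ (n-1) + sig (n-1) t * s ^ n := by
  have := sig_pos (by omega : 1 ≤ n - 1) ht
  positivity

lemma denom_eq {n : ℕ} (hn : 2 ≤ n) {t : ℝ} (ht : 0 < t) (s : ℝ) :
    1 - Qfun n t + Qfun n t * s ^ n
      = (t ^ (n-1) + sig (n-1) t * s ^ n) / sig n t := by
  obtain ⟨m, rfl⟩ : ∃ m, n = m + 1 := ⟨n - 1, by omega⟩
  rw [q_eq hn ht]
  have hσ : sig (m+1) t = sig m t + t ^ m := sig_succ m t
  have h0 : sig (m+1) t ≠ 0 := (sig_pos (by omega) ht).ne'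
  simp only [Nat.add_sub_cancel] at *
  field_simp
  rw [hσ]; ring

lemma factorizationP {n : ℕ} (hn : 2 ≤ n) (x t : ℝ) :
    sig n t * (1 - (1-t)*x) ^ (n-1) - t ^ (n-1) - sig (n-1) t * (1 - (1-t)*x) ^ n
      = (1-t)^2 * (x * (1-x)) * Efun n x t := by
  obtain ⟨l, rfl⟩ : ∃ l, n = l + 2 := ⟨n - 2, by omega⟩
  set s : ℝ := 1 - (1-t)*x with hs
  simp only [show l + 2 - 1 = l + 1 from rfl]
  have hgs : ∑ i ∈ Finset.range (l+1), s ^ i = sig (l+1) s := rfl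
  have h1 : sig (l+2) t * s ^ (l+1) - t ^ (l+1) - sig (l+1) t * s ^ (l+2)
      = (1-t) * x * (s ^ (l+1) * sig (l+1) t - t ^ (l+1) * sig (l+1) s) := by
    have hA : sig (l+2) t = sig (l+1) t + t ^ (l+1) := sig_succ _ t
    have hg : sig (l+1) s * (s - 1) = s ^ (l+1) - 1 := geom_sum_mul s (l+1)
    have hsx : s - 1 = -((1-t)*x) := by rw [hs]; ring
    rw [hsx] at hg
    rw [hA]
    linear_combination (-(t^(l+1))) * hg + (-(sig (l+1) t * s^(l+1))) * hs
  rw [h1]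
  have h2 : s ^ (l+1) * sig (l+1) t - t ^ (l+1) * sig (l+1) s
      = ∑ k ∈ Finset.range (l+1), (s ^ (l+1) * t ^ k - t ^ (l+1) * s ^ k) := by
    rw [Finset.sum_sub_distrib, ← Finset.mul_sum, ← Finset.mul_sum]; rfl
  rw [h2]
  have h3 : ∀ k ∈ Finset.range (l+1),
      s ^ (l+1) * t ^ k - t ^ (l+1) * s ^ k
        = (s - t) * (t ^ k * s ^ k *
            ∑ i ∈ Finset.range (l+1-k), s ^ i * t ^ (l+1-k-1-i)) := by
    intro k hk
    have hg := geom_sum₂_mul s t (l+1-k)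
    have e1 : s ^ k * s ^ (l+1-k) = s ^ (l+1) := by
      rw [← pow_add]; congr 1; have := Finset.mem_range.mp hk; omega
    have e2 : t ^ k * t ^ (l+1-k) = t ^ (l+1) := by
      rw [← pow_add]; congr 1; have := Finset.mem_range.mp hk; omega
    rw [← e1, ← e2]
    linear_combination (-(t^k * s^k)) * hg
  rw [Finset.sum_congr rfl h3, ← Finset.mul_sum]
  have hst : s - t = (1-t)*(1-x) := by rw [hs]; ring
  rw [hst]
  unfold Efun
  simp only [show l + 2 - 1 = l + 1 from rfl, ← hs]
  ring

lemma two_mul_sum_sub (m : ℕ) : 2 * ∑ k ∈ Finset.range m, (m - k) = m * (m+1) := by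
  induction m with
  | zero => simp
  | succ m ih =>
    have h : ∑ k ∈ Finset.range (m+1), (m + 1 - k)
        = (∑ k ∈ Finset.range m, (m - k)) + (m+1) := by
      rw [Finset.sum_range_succ' (fun k => m + 1 - k) m]
      simp only [Nat.succ_sub_succ, Nat.sub_zero]
    calc 2 * ∑ k ∈ Finset.range (m+1), (m+1-k)
        = 2 * ((∑ k ∈ Finset.range m, (m-k)) + (m+1)) := by rw [h]
      _ = m*(m+1) + 2*(m+1) := by rw [Nat.mul_add, ih]
      _ = (m+1)*(m+1+1) := by ring

lemma Efun_one {n : ℕ} (hn : 2 ≤ n) (x : ℝ) :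
    2 * Efun n x 1 = ((n:ℝ) - 1) * n := by
  have h : Efun n x 1 = ∑ k ∈ Finset.range (n-1), ((n-1-k : ℕ) : ℝ) := by
    unfold Efun
    apply Finset.sum_congr rfl
    intro k _
    simp
  have h2 := two_mul_sum_sub (n-1)
  rw [Nat.sub_add_cancel (by omega : 1 ≤ n)] at h2
  rw [h]
  have h3 : (2:ℝ) * ∑ k ∈ Finset.range (n-1), ((n-1-k:ℕ):ℝ)
      = ((n-1:ℕ):ℝ) * ((n:ℕ):ℝ) := by exact_mod_cast h2
  rw [h3, Nat.cast_sub (by omega : 1 ≤ n)]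
  norm_num

lemma Rfun_eq_sqrt {n : ℕ} (hn : 2 ≤ n) {x t : ℝ} (ht : 0 < t) (hx : x ∈ Icc (0:ℝ) 1) :
    Rfun n x t = Real.sqrt (Gfun n x t) := by
  set s : ℝ := 1 - (1-t)*x with hs
  have hspos : 0 < s := s_pos ht hx
  have hD : 0 < t ^ (n-1) + sig (n-1) t * s ^ n := dtil_pos hn ht hspos
  have hσ : 0 < sig n t := sig_pos (by omega) ht
  by_cases h1 : t = 1
  · subst h1
    rw [Rfun, if_pos rfl]
    have hs1 : s = 1 := by rw [hs]; ring
    have hE := Efun_one hn x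
    unfold Gfun
    rw [← hs, hs1, sig_one]
    have hcast : (sig (n-1) 1 : ℝ) = (n:ℝ) - 1 := by
      rw [sig_one, Nat.cast_sub (by omega)]; norm_num
    rw [hcast]
    congr 1
    have hnne : (n:ℝ) ≠ 0 := by positivity
    simp only [one_pow, one_mul]
    rw [eq_div_iff (by ring_nf; exact pow_ne_zero 2 hnne)]
    linear_combination (-(x*(1-x)*(n:ℝ))) * hE
  · rw [Rfun, if_neg h1, denom_eq hn ht, ← hs]
    have habs : |1 - t| ≠ 0 := by
      simp only [ne_eq, abs_eq_zero, sub_eq_zero]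
      exact fun hh => h1 hh.symm
    have key : (s ^ (n-1) / ((t ^ (n-1) + sig (n-1) t * s ^ n) / sig n t)) ^ 2 - 1
        = (1-t)^2 * Gfun n x t := by
      have hP := factorizationP hn x t
      rw [← hs] at hP
      unfold Gfun
      rw [← hs]
      have e2 : (s ^ (n-1) * sig n t) ^ 2 - (t ^ (n-1) + sig (n-1) t * s ^ n) ^ 2
          = (1-t)^2 * (x * (1-x) * Efun n x t *
              (sig n t * (1 - (1-t)*x) ^ (n-1) +
                (t ^ (n-1) + sig (n-1) t * (1 - (1-t)*x) ^ n))) := by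
        rw [← hs]
        linear_combination (sig n t * s^(n-1) + (t^(n-1) + sig (n-1) t * s^n)) * hP
      rw [div_div_eq_mul_div, div_pow, div_sub_one (pow_ne_zero 2 hD.ne'), e2, ← hs,
        mul_div_assoc]
    rw [key, Real.sqrt_mul (sq_nonneg (1-t)), Real.sqrt_sq_eq_abs, ← mul_assoc,
      one_div, inv_mul_cancel₀ habs, one_mul]

lemma sig_inv {n : ℕ} (hn : 1 ≤ n) {t : ℝ} (ht : t ≠ 0) :
    sig n t⁻¹ = sig n t / t ^ (n-1) := by
  rw [eq_div_iff (pow_ne_zero _ ht)]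
  unfold sig
  rw [Finset.sum_mul, ← Finset.sum_range_reflect (fun k => t ^ k) n]
  apply Finset.sum_congr rfl
  intro k hk
  have hk' : k ≤ n - 1 := by have := Finset.mem_range.mp hk; omega
  rw [pow_sub₀ t ht hk', inv_pow]
  ring

lemma frac_symm {n : ℕ} (hn : 2 ≤ n) {t x : ℝ} (ht : 0 < t) (hx : x ∈ Icc (0:ℝ) 1) :
    (1 - (1 - t⁻¹) * (1-x)) ^ (n-1) /
      (1 - Qfun n t⁻¹ + Qfun n t⁻¹ * (1 - (1 - t⁻¹) * (1-x)) ^ n)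
    = (1 - (1 - t) * x) ^ (n-1) /
      (1 - Qfun n t + Qfun n t * (1 - (1 - t) * x) ^ n) := by
  obtain ⟨l, rfl⟩ : ∃ l, n = l + 2 := ⟨n - 2, by omega⟩
  have hti : (0:ℝ) < t⁻¹ := inv_pos.mpr ht
  set s := 1 - (1-t)*x with hsdef
  have hsp : 0 < s := s_pos ht hx
  have hs' : 1 - (1 - t⁻¹) * (1-x) = s / t := by rw [hsdef]; field_simp; ring
  rw [denom_eq hn hti, denom_eq hn ht, hs']
  simp only [show l+2-1 = l+1 from rfl]
  have h1 : 0 < sig (l+1) t := sig_pos (by omega) ht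
  have h2 : 0 < sig (l+2) t := sig_pos (by omega) ht
  have h1' : 0 < sig (l+1) t⁻¹ := sig_pos (by omega) hti
  have h2' : 0 < sig (l+2) t⁻¹ := sig_pos (by omega) hti
  have hd1 : 0 < ((t⁻¹) ^ (l+1) + sig (l+1) t⁻¹ * (s/t) ^ (l+2)) / sig (l+2) t⁻¹ :=
    div_pos (add_pos (pow_pos hti _) (mul_pos h1' (pow_pos (div_pos hsp ht) _))) h2'
  have hd2 : 0 < (t ^ (l+1) + sig (l+1) t * s ^ (l+2)) / sig (l+2) t :=
    div_pos (add_pos (pow_pos ht _) (mul_pos h1 (pow_pos hsp _))) h2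
  rw [div_eq_div_iff hd1.ne' hd2.ne']
  rw [sig_inv (by omega : 1 ≤ l+1) ht.ne', sig_inv (by omega : 1 ≤ l+2) ht.ne']
  simp only [show l+1-1 = l from rfl, show l+2-1 = l+1 from rfl]
  have htne : t ≠ 0 := ht.ne'
  simp only [inv_pow, div_pow]
  field_simp
  ring

/-- `(x,t) ↦ R(x;t)` is continuous on `[0,1]×(0,∞)`; moreover
`R(0;t) = R(1;t) = 0` for all `t > 0` and `R(1−x;t⁻¹) = t·R(x;t)` for all
`x ∈ [0,1]`, `t > 0`. -/
theorem stmt13 (n : ℕ) (hn : 2 ≤ n) :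
    ContinuousOn (fun p : ℝ × ℝ => Rfun n p.1 p.2) (Icc (0:ℝ) 1 ×ˢ Ioi (0:ℝ)) ∧
    (∀ t : ℝ, 0 < t → Rfun n 0 t = 0 ∧ Rfun n 1 t = 0) ∧
    (∀ t : ℝ, 0 < t → ∀ x ∈ Icc (0:ℝ) 1, Rfun n (1 - x) t⁻¹ = t * Rfun n x t) := by
  refine ⟨?_, ?_, ?_⟩
  · have hE : Continuous fun p : ℝ × ℝ => Efun n p.1 p.2 := by
      unfold Efun
      apply continuous_finset_sum
      intro k _
      apply Continuous.mul
      · fun_prop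
      · apply continuous_finset_sum
        intro i _
        fun_prop
    have hsig : ∀ m : ℕ, Continuous fun p : ℝ × ℝ => sig m p.2 := by
      intro m; unfold sig; apply continuous_finset_sum; intro k _; fun_prop
    have hb : Continuous fun p : ℝ × ℝ => 1 - (1 - p.2) * p.1 := by fun_prop
    have hnum : Continuous fun p : ℝ × ℝ =>
        p.1 * (1 - p.1) * Efun n p.1 p.2 *
          (sig n p.2 * (1 - (1 - p.2) * p.1) ^ (n-1) +
            (p.2 ^ (n-1) + sig (n-1) p.2 * (1 - (1 - p.2) * p.1) ^ n)) :=
      (((continuous_fst.mul (continuous_const.sub continuous_fst)).mul hE).mul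
        (((hsig n).mul (hb.pow _)).add
          ((continuous_snd.pow _).add ((hsig (n-1)).mul (hb.pow _)))))
    have hden : Continuous fun p : ℝ × ℝ =>
        (p.2 ^ (n-1) + sig (n-1) p.2 * (1 - (1 - p.2) * p.1) ^ n) ^ 2 :=
      ((continuous_snd.pow _).add ((hsig (n-1)).mul (hb.pow _))).pow 2
    have hGc : ContinuousOn (fun p : ℝ × ℝ => Gfun n p.1 p.2)
        (Icc (0:ℝ) 1 ×ˢ Ioi (0:ℝ)) := by
      apply ContinuousOn.div hnum.continuousOn hden.continuousOn
      intro p hp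
      have hp1 : p.1 ∈ Icc (0:ℝ) 1 := hp.1
      have hp2 : (0:ℝ) < p.2 := hp.2
      have := dtil_pos hn hp2 (s_pos hp2 hp1) (n := n)
      positivity
    have hsq : ContinuousOn (fun p : ℝ × ℝ => Real.sqrt (Gfun n p.1 p.2))
        (Icc (0:ℝ) 1 ×ˢ Ioi (0:ℝ)) := Real.continuous_sqrt.comp_continuousOn hGc
    exact hsq.congr (fun p hp => Rfun_eq_sqrt hn hp.2 hp.1)
  · intro t ht
    constructor
    · rw [Rfun_eq_sqrt hn ht (by norm_num : (0:ℝ) ∈ Icc (0:ℝ) 1)]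
      have h0 : Gfun n 0 t = 0 := by unfold Gfun; simp
      rw [h0, Real.sqrt_zero]
    · rw [Rfun_eq_sqrt hn ht (by norm_num : (1:ℝ) ∈ Icc (0:ℝ) 1)]
      have h0 : Gfun n 1 t = 0 := by unfold Gfun; simp
      rw [h0, Real.sqrt_zero]
  · intro t ht x hx
    by_cases h1 : t = 1
    · subst h1
      simp only [inv_one, one_mul]
      rw [Rfun, if_pos rfl, Rfun, if_pos rfl]
      congr 1
      ring
    · have hti : (0:ℝ) < t⁻¹ := inv_pos.mpr ht
      have ht1' : t⁻¹ ≠ 1 := fun hh => h1 (by rwa [inv_eq_one] at hh)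
      rw [Rfun, if_neg ht1', Rfun, if_neg h1, frac_symm hn ht hx]
      have habs : |1 - t⁻¹| = |1 - t| / t := by
        rw [show (1:ℝ) - t⁻¹ = (t - 1) / t by field_simp, abs_div, abs_of_pos ht,
          abs_sub_comm]
      rw [habs, one_div_div]
      ring
end
end

section
/- For every r > 0 with r ≠ 1 and every x ∈ (0,1), R(·;r) is differentiable at x and R_x(x;r) = −(((1−r)^2 R(x;r)^2 + 1)/((1−r)·R(x;r)))·( (n−1)/(1−(1−r)x) − n·Q(r)·sqrt((1−r)^2 R(x;r)^2 + 1) ). -/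
open Real MeasureTheory intervalIntegral Set

noncomputable section

set_option maxHeartbeats 1000000 in
/-- for `r > 0`, `r ≠ 1`, and `x ∈ (0,1)`, `R(·;r)` is differentiable at
`x` with `R_x(x;r) = −(((1−r)²R² + 1)/((1−r)R))·((n−1)/(1−(1−r)x) − nQ(r)√((1−r)²R² + 1))`. -/
theorem stmt15 (n : ℕ) (hn : 2 ≤ n)
    (r : ℝ) (hr : 0 < r) (hr1 : r ≠ 1) (x : ℝ) (hx : x ∈ Ioo (0:ℝ) 1) :
    HasDerivAt (fun x' => Rfun n x' r)
      (-(((1 - r) ^ 2 * Rfun n x r ^ 2 + 1) / ((1 - r) * Rfun n x r)) *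
        (((n:ℝ) - 1) / (1 - (1 - r) * x)
          - n * Qfun n r * Real.sqrt ((1 - r) ^ 2 * Rfun n x r ^ 2 + 1))) x := by
  obtain ⟨k, rfl⟩ : ∃ k, n = k + 2 := ⟨n - 2, by omega⟩
  obtain ⟨hx0, hx1⟩ := hx
  have hc : (1 : ℝ) - r ≠ 0 := sub_ne_zero.mpr (Ne.symm hr1)
  set c : ℝ := 1 - r with hc_def
  set Q : ℝ := Qfun (k + 2) r with hQ_set
  have hQ_def : Q = (1 - r ^ (k + 1)) / (1 - r ^ (k + 2)) := by
    simp [hQ_set, Qfun, hr1]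
  -- basic facts about Q
  have hQpos : 0 < Q ∧ Q < 1 := by
    rcases hr1.lt_or_gt with h | h
    · have h1 : r ^ (k + 1) < 1 := pow_lt_one₀ hr.le h (by omega)
      have h2 : r ^ (k + 2) < 1 := pow_lt_one₀ hr.le h (by omega)
      have h3 : r ^ (k + 2) < r ^ (k + 1) := pow_lt_pow_right_of_lt_one₀ hr h (by omega)
      constructor
      · rw [hQ_def]; exact div_pos (by linarith) (by linarith)
      · rw [hQ_def, div_lt_one (by linarith)]; linarith
    · have h1 : 1 < r ^ (k + 1) := one_lt_pow₀ h (by omega)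
      have h2 : 1 < r ^ (k + 2) := one_lt_pow₀ h (by omega)
      have h3 : r ^ (k + 1) < r ^ (k + 2) := pow_lt_pow_right₀ h (by omega)
      have hQ' : Q = (r ^ (k + 1) - 1) / (r ^ (k + 2) - 1) := by
        rw [hQ_def, ← neg_div_neg_eq]; ring_nf
      constructor
      · rw [hQ']; exact div_pos (by linarith) (by linarith)
      · rw [hQ', div_lt_one (by linarith)]; linarith
  obtain ⟨hQ0, hQ1⟩ := hQpos
  have hrn : (1 : ℝ) - r ^ (k + 2) ≠ 0 := by
    rcases hr1.lt_or_gt with h | h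
    · have := pow_lt_one₀ hr.le h (n := k + 2) (by omega); linarith
    · have := one_lt_pow₀ h (n := k + 2) (by omega); linarith
  have hQmul : Q * (1 - r ^ (k + 2)) = 1 - r ^ (k + 1) := by
    rw [hQ_def, div_mul_cancel₀ _ hrn]
  -- the point a = 1 - c x
  set a : ℝ := 1 - c * x with ha_def
  have ha_pos : 0 < a := by
    rcases hr1.lt_or_gt with h | h
    · have hcpos : 0 < c := by rw [hc_def]; linarith
      have : c * x < c * 1 := by
        exact mul_lt_mul_of_pos_left hx1 hcpos
      rw [ha_def]; nlinarith
    · have : c * x < 0 := mul_neg_of_neg_of_pos (by rw [hc_def]; linarith) hx0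
      rw [ha_def]; linarith
  have hane : a ≠ 0 := ha_pos.ne'
  -- g and its positivity at a
  set g : ℝ → ℝ := fun y => y ^ (k + 1) - (1 - Q) - Q * y ^ (k + 2) with hg_def
  have hg_deriv : ∀ y : ℝ, HasDerivAt g (((k : ℝ) + 1) * y ^ k - Q * (((k : ℝ) + 2) * y ^ (k + 1))) y := by
    intro y
    have h1 : HasDerivAt (fun y : ℝ => y ^ (k + 1)) (((k : ℝ) + 1) * y ^ k) y := by
      simpa using hasDerivAt_pow (k + 1) y
    have h2 : HasDerivAt (fun y : ℝ => y ^ (k + 2)) (((k : ℝ) + 2) * y ^ (k + 1)) y := by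
      simpa using hasDerivAt_pow (k + 2) y
    exact (h1.sub_const (1 - Q)).sub (h2.const_mul Q)
  have hg_cont : Continuous g := by
    rw [hg_def]
    exact ((continuous_pow (k + 1)).sub continuous_const).sub
      (continuous_const.mul (continuous_pow (k + 2)))
  set m : ℝ := ((k : ℝ) + 1) / (((k : ℝ) + 2) * Q) with hm_def
  have hm_pos : 0 < m := div_pos (by positivity) (by positivity)
  have hmono : StrictMonoOn g (Icc 0 m) := by
    apply strictMonoOn_of_deriv_pos (convex_Icc 0 m) hg_cont.continuousOn
    intro y hy
    rw [interior_Icc] at hy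
    rw [(hg_deriv y).deriv]
    have hylt : y * (((k : ℝ) + 2) * Q) < (k : ℝ) + 1 := by
      have := hy.2
      rw [hm_def, lt_div_iff₀ (by positivity)] at this
      exact this
    have hyk : 0 < y ^ k := pow_pos hy.1 k
    rw [pow_succ y k]
    nlinarith [mul_pos hyk (sub_pos.mpr hylt)]
  have hanti : StrictAntiOn g (Ici m) := by
    apply strictAntiOn_of_deriv_neg (convex_Ici m) hg_cont.continuousOn
    intro y hy
    rw [interior_Ici] at hy
    rw [(hg_deriv y).deriv]
    have hy' : m < y := hy
    have hygt : (k : ℝ) + 1 < y * (((k : ℝ) + 2) * Q) := by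
      rw [hm_def, div_lt_iff₀ (by positivity)] at hy'
      exact hy'
    have hy0 : 0 < y := lt_trans hm_pos hy
    have hyk : 0 < y ^ k := pow_pos hy0 k
    rw [pow_succ y k]
    nlinarith [mul_pos hyk (sub_pos.mpr hygt)]
  have hg_r : g r = 0 := by
    simp only [hg_def]
    linear_combination hQmul
  have hg_1 : g 1 = 0 := by simp [hg_def]
  -- a is strictly between min r 1 and max r 1
  have hbetween : ∃ lo hi : ℝ, 0 < lo ∧ lo < a ∧ a < hi ∧ g lo = 0 ∧ g hi = 0 := by
    rcases hr1.lt_or_gt with h | h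
    · refine ⟨r, 1, hr, ?_, ?_, hg_r, hg_1⟩
      · have hcpos : 0 < c := by rw [hc_def]; linarith
        have : c * x < c * 1 := mul_lt_mul_of_pos_left hx1 hcpos
        rw [ha_def, hc_def]; nlinarith
      · have : 0 < c * x := mul_pos (by rw [hc_def]; linarith) hx0
        rw [ha_def]; linarith
    · refine ⟨1, r, one_pos, ?_, ?_, hg_1, hg_r⟩
      · have : c * x < 0 := mul_neg_of_neg_of_pos (by rw [hc_def]; linarith) hx0
        rw [ha_def]; linarith
      · have hcneg : c < 0 := by rw [hc_def]; linarith
        have : c * 1 < c * x := by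
          apply mul_lt_mul_of_neg_left hx1 hcneg
        rw [ha_def, hc_def] at *; nlinarith
  have hga : 0 < g a := by
    obtain ⟨lo, hi, hlo0, hloa, hahi, hglo, hghi⟩ := hbetween
    by_cases ham : a ≤ m
    · have hlom : lo < m := lt_of_lt_of_le hloa ham
      have := hmono ⟨hlo0.le, hlom.le⟩ ⟨ha_pos.le, ham⟩ hloa
      rw [hglo] at this; exact this
    · push_neg at ham
      have := hanti (mem_Ici.mpr ham.le) (mem_Ici.mpr (le_of_lt (lt_trans ham hahi))) hahi
      rw [hghi] at this; exact this
  -- main quantities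
  set D : ℝ := 1 - Q + Q * a ^ (k + 2) with hD_def
  have hD_pos : 0 < D := by
    have : 0 < Q * a ^ (k + 2) := mul_pos hQ0 (pow_pos ha_pos _)
    rw [hD_def]; linarith
  have hND : D < a ^ (k + 1) := by
    simp only [hg_def] at hga
    rw [hD_def]; linarith
  set F : ℝ := a ^ (k + 1) / D with hF_def
  have hF1 : 1 < F := (one_lt_div hD_pos).mpr hND
  have hF0 : 0 < F := lt_trans one_pos hF1
  have hfx_pos : 0 < F ^ 2 - 1 := by nlinarith
  set S : ℝ := Real.sqrt (F ^ 2 - 1) with hS_def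
  have hS_pos : 0 < S := Real.sqrt_pos.mpr hfx_pos
  have hS_sq : S ^ 2 = F ^ 2 - 1 := Real.sq_sqrt hfx_pos.le
  -- rewrite Rfun
  have hRfun : (fun x' : ℝ => Rfun (k + 2) x' r) =
      fun x' : ℝ => (1 / |c|) * Real.sqrt (((1 - c * x') ^ (k + 1) /
        (1 - Q + Q * (1 - c * x') ^ (k + 2))) ^ 2 - 1) := by
    funext y
    simp only [Rfun, if_neg hr1, ← hQ_set, ← hc_def]
    norm_num
  have hRx : Rfun (k + 2) x r = (1 / |c|) * S := by
    rw [congrFun hRfun x, ← ha_def, ← hD_def, ← hF_def, ← hS_def]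
  -- derivative computation
  have ha' : HasDerivAt (fun y : ℝ => 1 - c * y) (-c) x := by
    simpa using ((hasDerivAt_id x).const_mul c).const_sub 1
  have hN' : HasDerivAt (fun y : ℝ => (1 - c * y) ^ (k + 1))
      (((k : ℝ) + 1) * a ^ k * (-c)) x := by
    have := ha'.pow (k + 1)
    simpa [← ha_def, Pi.pow_def] using this
  have hDn' : HasDerivAt (fun y : ℝ => 1 - Q + Q * (1 - c * y) ^ (k + 2))
      (Q * (((k : ℝ) + 2) * a ^ (k + 1) * (-c))) x := by
    have h2 : HasDerivAt (fun y : ℝ => (1 - c * y) ^ (k + 2))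
        (((k : ℝ) + 2) * a ^ (k + 1) * (-c)) x := by
      have := ha'.pow (k + 2)
      simpa [← ha_def, Pi.pow_def] using this
    simpa using (h2.const_mul Q).const_add (1 - Q)
  have hDnx : (1 : ℝ) - Q + Q * (1 - c * x) ^ (k + 2) = D := by rw [hD_def, ha_def]
  have hF' : HasDerivAt (fun y : ℝ => (1 - c * y) ^ (k + 1) /
      (1 - Q + Q * (1 - c * y) ^ (k + 2)))
      ((((k : ℝ) + 1) * a ^ k * (-c) * D - a ^ (k + 1) * (Q * (((k : ℝ) + 2) * a ^ (k + 1) * (-c)))) / D ^ 2) x := by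
    have := hN'.div hDn' (by rw [hDnx]; exact hD_pos.ne')
    simpa [← ha_def, ← hD_def, Pi.div_def] using this
  set F' : ℝ := (((k : ℝ) + 1) * a ^ k * (-c) * D - a ^ (k + 1) * (Q * (((k : ℝ) + 2) * a ^ (k + 1) * (-c)))) / D ^ 2 with hF'_def
  have hf' : HasDerivAt (fun y : ℝ => ((1 - c * y) ^ (k + 1) /
      (1 - Q + Q * (1 - c * y) ^ (k + 2))) ^ 2 - 1) (2 * F * F') x := by
    have := (hF'.pow 2).sub_const 1
    simpa [← ha_def, ← hD_def, ← hF_def] using this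
  have hfx : ((1 - c * x) ^ (k + 1) / (1 - Q + Q * (1 - c * x) ^ (k + 2))) ^ 2 - 1 = F ^ 2 - 1 := by
    rw [← ha_def, ← hD_def, ← hF_def]
  have hsqrt : HasDerivAt (fun y : ℝ => Real.sqrt (((1 - c * y) ^ (k + 1) /
      (1 - Q + Q * (1 - c * y) ^ (k + 2))) ^ 2 - 1)) ((2 * F * F') / (2 * S)) x := by
    have := hf'.sqrt (by rw [hfx]; exact hfx_pos.ne')
    rwa [hfx, ← hS_def] at this
  have hmain : HasDerivAt (fun x' : ℝ => Rfun (k + 2) x' r)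
      ((1 / |c|) * ((2 * F * F') / (2 * S))) x := by
    rw [hRfun]
    exact hsqrt.const_mul (1 / |c|)
  -- identify the derivative value
  clear_value c Q a g m D F S F'
  suffices hval : (-((c ^ 2 * Rfun (k + 2) x r ^ 2 + 1) / (c * Rfun (k + 2) x r)) *
        ((((k + 2 : ℕ) : ℝ) - 1) / a
          - ((k + 2 : ℕ) : ℝ) * Q * Real.sqrt (c ^ 2 * Rfun (k + 2) x r ^ 2 + 1)))
      = (1 / |c|) * ((2 * F * F') / (2 * S)) by
    rw [hval]; exact hmain
  have hcsq : c ^ 2 * Rfun (k + 2) x r ^ 2 + 1 = F ^ 2 := by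
    rw [hRx]
    have habs : |c| ^ 2 = c ^ 2 := sq_abs c
    have habs0 : |c| ≠ 0 := abs_ne_zero.mpr hc
    field_simp
    nlinarith [hS_sq]
  have hsqrtF : Real.sqrt (c ^ 2 * Rfun (k + 2) x r ^ 2 + 1) = F := by
    rw [hcsq, Real.sqrt_sq hF0.le]
  rw [hsqrtF, hcsq, hRx]
  rw [hF'_def]
  have habs0 : |c| ≠ 0 := abs_ne_zero.mpr hc
  rcases hr1.lt_or_gt with h | h
  · have hcpos : 0 < c := by rw [hc_def]; linarith
    rw [abs_of_pos hcpos]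
    rw [hF_def]
    push_cast
    field_simp
    ring
  · have hcneg : c < 0 := by rw [hc_def]; linarith
    rw [abs_of_neg hcneg]
    rw [hF_def]
    push_cast
    field_simp
    ring
end
end

section
/- For all r, t > 0, the function u(z;r,t) is differentiable in r at z = 0 with u_r(0;r,t) = n·(d/dr)(r·Q(r))/η(t), and this quantity is strictly positive. -/
open Real MeasureTheory intervalIntegral Set

noncomputable section

lemma sum_pow_pos (n : ℕ) (hn : 2 ≤ n) {s : ℝ} (hs : 0 < s) :
    0 < ∑ i ∈ Finset.range n, s ^ i := by
  apply Finset.sum_pos (fun i _ => by positivity)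
  exact Finset.nonempty_range_iff.mpr (by omega)

lemma mul_Qfun_eq (n : ℕ) (hn : 2 ≤ n) {s : ℝ} (hs : 0 < s) :
    s * Qfun n s = 1 - (∑ i ∈ Finset.range n, s ^ i)⁻¹ := by
  have hD := sum_pow_pos n hn hs
  by_cases h1 : s = 1
  · subst h1
    have hn0 : (n : ℝ) ≠ 0 := Nat.cast_ne_zero.mpr (by omega)
    simp only [Qfun, if_pos rfl, ↓reduceIte, one_pow, Finset.sum_const, Finset.card_range,
      nsmul_eq_mul, mul_one]
    field_simp
  · have hmul : (∑ i ∈ Finset.range n, s ^ i) * (s - 1) = s ^ n - 1 := geom_sum_mul s n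
    have hsn : s * s ^ (n - 1) = s ^ n := by
      rw [← pow_succ']; congr 1; omega
    have hs1 : s - 1 ≠ 0 := sub_ne_zero.mpr h1
    have hne : (1 : ℝ) - s ^ n ≠ 0 := by
      intro h
      have : (∑ i ∈ Finset.range n, s ^ i) * (s - 1) = 0 := by rw [hmul]; linarith
      rcases mul_eq_zero.mp this with h' | h'
      · exact hD.ne' h'
      · exact hs1 h'
    rw [Qfun, if_neg h1]
    have hfrac : 1 - (∑ i ∈ Finset.range n, s ^ i)⁻¹
        = ((∑ i ∈ Finset.range n, s ^ i) - 1) / (∑ i ∈ Finset.range n, s ^ i) := by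
      field_simp
    rw [hfrac, ← mul_div_assoc, div_eq_div_iff hne hD.ne']
    linear_combination (-(∑ i ∈ Finset.range n, s ^ i)) * hsn + hmul

lemma Qfun_pos (n : ℕ) (hn : 2 ≤ n) {t : ℝ} (ht : 0 < t) : 0 < Qfun n t := by
  have hD := sum_pow_pos n hn ht
  have hD1 : 1 < ∑ i ∈ Finset.range n, t ^ i := by
    have h2 : (2 : ℕ) ≤ n := hn
    calc (1:ℝ) < 1 + t := by linarith
    _ = ∑ i ∈ Finset.range 2, t ^ i := by simp [Finset.sum_range_succ]
    _ ≤ ∑ i ∈ Finset.range n, t ^ i :=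
        Finset.sum_le_sum_of_subset_of_nonneg (Finset.range_subset_range.mpr h2)
          (fun i _ _ => by positivity)
  have htQ : 0 < t * Qfun n t := by
    rw [mul_Qfun_eq n hn ht]
    have : (∑ i ∈ Finset.range n, t ^ i)⁻¹ < 1 := by
      rw [inv_lt_one_iff₀]; right; exact hD1
    linarith
  by_contra hQ
  push_neg at hQ
  nlinarith

lemma Rfun_inv_nonneg (n : ℕ) (y t : ℝ) : 0 ≤ (Rfun n y t)⁻¹ := by
  apply inv_nonneg.mpr
  unfold Rfun
  split_ifs
  · exact Real.sqrt_nonneg _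
  · exact mul_nonneg (by positivity) (Real.sqrt_nonneg _)

lemma zeta_one (n : ℕ) (t : ℝ) : zeta n 1 t = 0 := by
  simp [zeta]

lemma Pfun_pos (n : ℕ) (zinv : ℝ → ℝ → ℝ)
    (hzinv : ∀ t : ℝ, 0 < t → ∀ x ∈ Icc (0:ℝ) 1, zinv (zeta n x t) t = x)
    {t : ℝ} (ht : 0 < t) : 0 < Pfun n t := by
  have hnonneg : 0 ≤ Pfun n t := by
    apply intervalIntegral.integral_nonneg (by norm_num)
    intro y _
    exact Rfun_inv_nonneg n y t
  rcases hnonneg.lt_or_eq with h | h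
  · exact h
  · exfalso
    have h0 : zinv (zeta n 0 t) t = 0 := hzinv t ht 0 ⟨le_refl 0, zero_le_one⟩
    have h1 : zinv (zeta n 1 t) t = 1 := hzinv t ht 1 ⟨zero_le_one, le_refl 1⟩
    rw [zeta_one] at h1
    have : zeta n 0 t = 0 := by rw [Pfun] at h; exact h.symm
    rw [this, h1] at h0
    norm_num at h0

/-- for all `r, t > 0`, `u(0;·,t)` is differentiable at `r` with
`u_r(0;r,t) = n·(rQ(r))'/η(t) > 0`. -/
theorem stmt17 (n : ℕ) (hn : 2 ≤ n) (d : ℝ) (hd : 0 < d)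
    (zinv : ℝ → ℝ → ℝ)
    (hzinv : ∀ t : ℝ, 0 < t → ∀ x ∈ Icc (0:ℝ) 1, zinv (zeta n x t) t = x)
    (r t : ℝ) (hr : 0 < r) (ht : 0 < t) :
    HasDerivAt (fun r' => ufun n d zinv r' t 0)
      (n * deriv (fun s => s * Qfun n s) r / etafun n d t) r ∧
    0 < n * deriv (fun s => s * Qfun n s) r / etafun n d t := by
  have hQt : 0 < Qfun n t := Qfun_pos n hn ht
  have hPt : 0 < Pfun n t := Pfun_pos n zinv hzinv ht
  set Dn : ℝ → ℝ := fun s => ∑ i ∈ Finset.range n, s ^ i with hDn_def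
  set D' : ℝ := ∑ i ∈ Finset.range n, (i : ℝ) * r ^ (i - 1) with hD'_def
  have hDr : 0 < Dn r := sum_pow_pos n hn hr
  have hD'pos : 0 < D' := by
    apply Finset.sum_pos' (fun i _ => by positivity)
    refine ⟨1, Finset.mem_range.mpr (by omega), ?_⟩
    norm_num
  set C : ℝ := d / (Pfun n t * Qfun n t) with hC_def
  have hCpos : 0 < C := div_pos hd (mul_pos hPt hQt)
  -- derivative of the model function
  have hDn : HasDerivAt Dn D' r := by
    apply HasDerivAt.fun_sum
    intro i _
    exact hasDerivAt_pow i r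
  have hmodel : HasDerivAt (fun s => 1 - (Dn s)⁻¹) (D' / (Dn r) ^ 2) r := by
    have h : HasDerivAt (fun x => 1 - (Dn x)⁻¹) (-(-D' / Dn r ^ 2)) r :=
      (hDn.inv hDr.ne').const_sub 1
    convert h using 1
    ring
  -- eventual equality for `s * Qfun n s`
  have hEv2 : (fun s => s * Qfun n s) =ᶠ[nhds r] (fun s => 1 - (Dn s)⁻¹) := by
    filter_upwards [Ioi_mem_nhds hr] with s hs
    exact mul_Qfun_eq n hn hs
  have hderiv_eq : deriv (fun s => s * Qfun n s) r = D' / (Dn r) ^ 2 :=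
    (hmodel.congr_of_eventuallyEq hEv2).deriv
  -- eventual equality for the u function
  have hEv : (fun r' => ufun n d zinv r' t 0) =ᶠ[nhds r]
      (fun s => C * (1 - (Dn s)⁻¹)) := by
    filter_upwards [Ioi_mem_nhds hr] with s hs
    have hz1 : zinv 0 s = 1 := by
      have := hzinv s hs 1 ⟨zero_le_one, le_refl 1⟩
      rwa [zeta_one] at this
    have harg : Qfun n t * Pfun n t * 0 / (Qfun n s * d) = 0 := by ring
    rw [ufun, harg, hz1]
    have : s * Qfun n s = 1 - (Dn s)⁻¹ := mul_Qfun_eq n hn hs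
    rw [← this, hC_def]
    ring
  have hU : HasDerivAt (fun r' => ufun n d zinv r' t 0) (C * (D' / (Dn r) ^ 2)) r :=
    ((hmodel.const_mul C).congr_of_eventuallyEq hEv)
  have hn0 : (n : ℝ) ≠ 0 := Nat.cast_ne_zero.mpr (by omega)
  have hval : n * deriv (fun s => s * Qfun n s) r / etafun n d t
      = C * (D' / (Dn r) ^ 2) := by
    rw [hderiv_eq, etafun, hC_def]
    field_simp
  constructor
  · rw [hval]; exact hU
  · rw [hval]
    exact mul_pos hCpos (div_pos hD'pos (pow_pos hDr 2))
end
end
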